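/- arXiv:2508.15634 — 4 statements merged into one kernel-verified Lean document; each statement's English description precedes it below -/
import Mathlib

section
/- The curve Γ(s) = (cos s, sin s cos s, (1/24)(-9 sin s - sin 3s)) has no self-intersections on [0, 2π): if s₁, s₂ ∈ [0, 2π) and Γ(s₁) = Γ(s₂), then s₁ = s₂. -/
/-!
The first coordinate of `Γ` is `cos s` and, by the triple-angle formula, the third is
`-(3 sin s - sin³ s) / 6`. The cubic `t ↦ 3t - t³` is injective on `[-1, 1]`, since
`3a - a³ - (3b - b³) = (a - b)(3 - a² - ab - b²)` and the second factor vanishes there only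
at `a = b = ±1`. Hence `Γ s` determines both `cos s` and `sin s`, i.e. `s` modulo `2π`.
-/

abbrev H : Type := ℝ × ℝ × ℝ

noncomputable def Γ (s : ℝ) : H :=
  (Real.cos s, Real.sin s * Real.cos s,
    (1 / 24) * (-9 * Real.sin s - Real.sin (3 * s)))

open Real Set

lemma injOn_three_mul_sub_pow_three : InjOn (fun x : ℝ => 3 * x - x ^ 3) (Icc (-1) 1) := by
  intro a ha b hb hab
  have hfactor : (a - b) * (3 - (a ^ 2 + a * b + b ^ 2)) = 0 := by
    simp only at hab
    linear_combination hab
  rcases mul_eq_zero.1 hfactor with h | h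
  · linarith
  · have ha2 : a ^ 2 ≤ 1 := by nlinarith [ha.1, ha.2]
    have hb2 : b ^ 2 ≤ 1 := by nlinarith [hb.1, hb.2]
    nlinarith [sq_nonneg (a - b)]

lemma Γ_snd_snd (s : ℝ) : (Γ s).2.2 = -(3 * sin s - sin s ^ 3) / 6 := by
  simp only [Γ, sin_three_mul]
  ring

lemma injOn_cos_sin_Ico : InjOn (fun s : ℝ => (cos s, sin s)) (Ico 0 (2 * π)) := by
  intro s₁ hs₁ s₂ hs₂ h
  obtain ⟨hcos, hsin⟩ := Prod.ext_iff.1 h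
  have hangle : (s₁ : Angle) = s₂ := Angle.cos_sin_inj hcos hsin
  have : Fact (0 < 2 * π) := ⟨two_pi_pos⟩
  rw [← zero_add (2 * π)] at hs₁ hs₂
  exact (AddCircle.coe_eq_coe_iff_of_mem_Ico hs₁ hs₂).1 hangle

/-- Γ has no self-intersections on [0, 2π). -/
theorem gerono_lift_injective :
    Set.InjOn Γ (Set.Ico 0 (2 * Real.pi)) := by
  intro s₁ hs₁ s₂ hs₂ h
  have hcos : cos s₁ = cos s₂ := congrArg Prod.fst h
  have hcubic : 3 * sin s₁ - sin s₁ ^ 3 = 3 * sin s₂ - sin s₂ ^ 3 := by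
    have h₃ := congrArg (fun p : H => p.2.2) h
    simp only [Γ_snd_snd] at h₃
    linarith
  have hsin : sin s₁ = sin s₂ :=
    injOn_three_mul_sub_pow_three ⟨neg_one_le_sin s₁, sin_le_one s₁⟩
      ⟨neg_one_le_sin s₂, sin_le_one s₂⟩ hcubic
  exact injOn_cos_sin_Ico hs₁ hs₂ (Prod.ext hcos hsin)
end

section
/- The torus 𝒯 parametrized by 𝔗(u,v) = ((R + r cos u) cos v, (R + r cos u) sin v, r sin u), with R > r > 0, has no characteristic points: at every point p = 𝔗(u,v), the tangent plane to 𝒯 at p does not equal span{X(p), Y(p)}. -/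
noncomputable def Xvec (p : H) : H := (1, 0, -p.2.1 / 2)
noncomputable def Yvec (p : H) : H := (0, 1, p.1 / 2)

/-- Parametrization of the torus of revolution with radii R > r > 0. -/
noncomputable def torusPar (R r : ℝ) (u v : ℝ) : H :=
  ((R + r * Real.cos u) * Real.cos v, (R + r * Real.cos u) * Real.sin v, r * Real.sin u)

/-!
The horizontal plane at `p = (x, y, t)` is the kernel of the contact form
`θ_p = dt + (y dx - x dy) / 2`. The direction `𝔗_v` is tangent to the parallel through `p`, a
horizontal circle of radius `ρ = R + r cos u` about the `t`-axis, and `θ_p(𝔗_v) = -ρ² / 2 ≠ 0`;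
so `𝔗_v` is never horizontal, and the tangent plane cannot be the horizontal plane.
-/

noncomputable def contactForm (p : H) : H →ₗ[ℝ] ℝ where
  toFun w := w.2.2 + (p.2.1 * w.1 - p.1 * w.2.1) / 2
  map_add' w z := by simp only [Prod.fst_add, Prod.snd_add]; ring
  map_smul' c w := by simp only [Prod.smul_fst, Prod.smul_snd, smul_eq_mul, RingHom.id_apply]; ring

theorem span_Xvec_Yvec_le_ker_contactForm (p : H) :
    Submodule.span ℝ {Xvec p, Yvec p} ≤ LinearMap.ker (contactForm p) := by
  rw [Submodule.span_le]
  rintro w (rfl | rfl) <;>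
    simp only [SetLike.mem_coe, LinearMap.mem_ker, contactForm, Xvec, Yvec, LinearMap.coe_mk,
      AddHom.coe_mk] <;> ring

theorem hasDerivAt_torusPar_right (R r u v : ℝ) :
    HasDerivAt (fun v' => torusPar R r u v')
      ((R + r * Real.cos u) * -Real.sin v, (R + r * Real.cos u) * Real.cos v, 0) v :=
  ((Real.hasDerivAt_cos v).const_mul _).prodMk
    (((Real.hasDerivAt_sin v).const_mul _).prodMk (hasDerivAt_const v _))

theorem contactForm_torusPar_deriv_right (R r u v : ℝ) :
    contactForm (torusPar R r u v) (deriv (fun v' => torusPar R r u v') v) =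
      -(R + r * Real.cos u) ^ 2 / 2 := by
  rw [(hasDerivAt_torusPar_right R r u v).deriv]
  simp only [contactForm, torusPar, LinearMap.coe_mk, AddHom.coe_mk]
  linear_combination (-(R + r * Real.cos u) ^ 2 / 2) * Real.sin_sq_add_cos_sq v

theorem torus_radius_pos {R r : ℝ} (hr : 0 < r) (hRr : r < R) (u : ℝ) :
    0 < R + r * Real.cos u := by
  nlinarith [Real.neg_one_le_cos u]

/-- The torus 𝒯 has no characteristic points: at every point p = 𝔗(u,v), the tangent plane
span{𝔗_u, 𝔗_v} is different from the horizontal plane span{X(p), Y(p)}. -/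
theorem torus_has_no_characteristic_points (R r : ℝ) (hr : 0 < r) (hRr : r < R) (u v : ℝ) :
    Submodule.span ℝ {deriv (fun u' => torusPar R r u' v) u,
        deriv (fun v' => torusPar R r u v') v} ≠
      Submodule.span ℝ {Xvec (torusPar R r u v), Yvec (torusPar R r u v)} := by
  intro h
  have hhorizontal : deriv (fun v' => torusPar R r u v') v ∈
      Submodule.span ℝ {Xvec (torusPar R r u v), Yvec (torusPar R r u v)} :=
    h ▸ Submodule.subset_span (Set.mem_insert_of_mem _ rfl)
  have hvanish := LinearMap.mem_ker.mp (span_Xvec_Yvec_le_ker_contactForm _ hhorizontal)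
  rw [contactForm_torusPar_deriv_right] at hvanish
  nlinarith [torus_radius_pos hr hRr u]
end

section
/- Poincaré–Hopf obstruction: there is no nonvanishing continuous vector field on the closed 2-disk D² that points outward at every boundary point. Consequently, any continuous vector field on D² that is outward-pointing along ∂D² has a zero in the interior. -/
/-!
A nonvanishing field on the disk has a continuous logarithm, because the disk is simply connected
and `exp : ℂ → ℂ \ {0}` is a covering map. If the field `W` also points outward, then on the unit
circle `W z / z` lies in the right half-plane, so subtracting its principal logarithm yields a
continuous logarithm of `z` on the circle. There is none: along `t ↦ exp (t * I)` it would have to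
be `t * I` plus a constant, which is not `2π`-periodic.
-/

open Complex Metric
open scoped RealInnerProductSpace

theorem Complex.exists_continuous_exp_eq {A : Type*} [TopologicalSpace A] [SimplyConnectedSpace A]
    [LocallyPathConnectedSpace A] {f : A → ℂ} (hf : Continuous f) (h0 : ∀ a, f a ≠ 0) :
    ∃ L : A → ℂ, Continuous L ∧ ∀ a, exp (L a) = f a := by
  obtain ⟨a₀⟩ := (inferInstance : Nonempty A)
  obtain ⟨L, ⟨-, hL⟩, -⟩ := isCoveringMapOn_exp.existsUnique_continuousMap_lifts ⟨f, hf⟩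
    (exp_log (h0 a₀)) h0
  exact ⟨L, L.continuous, congr_fun hL⟩

theorem Complex.exists_continuous_exp_eq_on_closedBall {E : Type*} [NormedAddCommGroup E]
    [NormedSpace ℝ E] {f : E → ℂ} (hf : ContinuousOn f (closedBall 0 1))
    (h0 : ∀ x ∈ closedBall (0 : E) 1, f x ≠ 0) :
    ∃ L : E → ℂ, Continuous L ∧ ∀ x ∈ closedBall (0 : E) 1, exp (L x) = f x := by
  set r : E → E := fun x ↦ (max 1 ‖x‖)⁻¹ • x
  have hr_cont : Continuous r :=
    ((continuous_const.max continuous_norm).inv₀ fun x ↦ by positivity).smul continuous_id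
  have hr_mem (x : E) : r x ∈ closedBall 0 1 := by
    rw [mem_closedBall_zero_iff, norm_smul, norm_inv, Real.norm_of_nonneg (by positivity)]
    exact inv_mul_le_one_of_le₀ (le_max_right _ _) (by positivity)
  have hr_id (x : E) (hx : x ∈ closedBall 0 1) : r x = x := by
    rw [mem_closedBall_zero_iff] at hx
    simp [r, max_eq_left hx]
  obtain ⟨L, hL, hexp⟩ := exists_continuous_exp_eq (hf.comp_continuous hr_cont hr_mem)
    fun x ↦ h0 _ (hr_mem x)
  exact ⟨L, hL, fun x hx ↦ by rw [hexp, Function.comp_apply, hr_id x hx]⟩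

theorem Complex.not_exists_continuousOn_log_on_sphere :
    ¬ ∃ L : ℂ → ℂ, ContinuousOn L (sphere 0 1) ∧ ∀ z ∈ sphere (0 : ℂ) 1, exp (L z) = z := by
  rintro ⟨L, hL, hexp⟩
  have hcirc (t : ℝ) : exp (t * I) ∈ sphere (0 : ℂ) 1 := by simp
  set g : ℝ → ℂ := fun t ↦ L (exp (t * I)) - t * I
  have hg : Continuous g :=
    (hL.comp_continuous (by fun_prop) hcirc).sub (by fun_prop)
  have hg_exp (t : ℝ) : exp (g t) = 1 := by
    rw [exp_sub, hexp _ (hcirc t), div_self (exp_ne_zero _)]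
  have := isCoveringMap_exp.const_of_comp hg
    (fun t t' ↦ Subtype.ext <| (hg_exp t).trans (hg_exp t').symm) (2 * Real.pi) 0
  simp only [g, ofReal_mul, ofReal_ofNat, exp_two_pi_mul_I, ofReal_zero, zero_mul, exp_zero,
    sub_zero, sub_eq_self] at this
  exact two_pi_I_ne_zero this

theorem Complex.re_div_pos_of_inner_pos {w z : ℂ} (h : 0 < ⟪w, z⟫) : 0 < (w / z).re := by
  have hz : z ≠ 0 := by rintro rfl; simp at h
  rw [Complex.inner, mul_re, conj_re, conj_im] at h
  rw [div_re, ← add_div]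
  exact div_pos (by linarith) (normSq_pos.2 hz)

theorem Complex.exists_mem_ball_eq_zero_of_inner_pos {W : ℂ → ℂ}
    (hW : ContinuousOn W (closedBall 0 1)) (hout : ∀ z ∈ sphere (0 : ℂ) 1, 0 < ⟪W z, z⟫) :
    ∃ z ∈ ball (0 : ℂ) 1, W z = 0 := by
  suffices ∃ z ∈ closedBall (0 : ℂ) 1, W z = 0 by
    obtain ⟨z, hz, hWz⟩ := this
    refine ⟨z, mem_ball_zero_iff.2 ((mem_closedBall_zero_iff.1 hz).lt_of_ne fun hs ↦ ?_), hWz⟩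
    simpa [hWz] using hout z (mem_sphere_zero_iff_norm.2 hs)
  by_contra! h0
  obtain ⟨L, hL, hexp⟩ := exists_continuous_exp_eq_on_closedBall hW h0
  have hWs : ContinuousOn (fun z ↦ W z / z) (sphere 0 1) :=
    (hW.mono sphere_subset_closedBall).div continuousOn_id fun z hz ↦
      ne_zero_of_mem_unit_sphere ⟨z, hz⟩
  refine not_exists_continuousOn_log_on_sphere
    ⟨fun z ↦ L z - log (W z / z), hL.continuousOn.sub (hWs.clog fun z hz ↦ ?_), fun z hz ↦ ?_⟩
  · exact Or.inl (re_div_pos_of_inner_pos (hout z hz))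
  · have hz0 : z ≠ 0 := ne_zero_of_mem_unit_sphere ⟨z, hz⟩
    have hWz := h0 z (sphere_subset_closedBall hz)
    rw [exp_sub, hexp z (sphere_subset_closedBall hz), exp_log (div_ne_zero hWz hz0),
      div_div_cancel₀ hWz]

theorem LinearIsometryEquiv.exists_norm_lt_one_eq_zero_of_inner_pos {E : Type*}
    [NormedAddCommGroup E] [InnerProductSpace ℝ E] (Φ : E ≃ₗᵢ[ℝ] ℂ) {V : E → E}
    (hV : ContinuousOn V (closedBall 0 1)) (hout : ∀ p : E, ‖p‖ = 1 → 0 < ⟪V p, p⟫) :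
    ∃ p : E, ‖p‖ < 1 ∧ V p = 0 := by
  have hW : ContinuousOn (fun z ↦ Φ (V (Φ.symm z))) (closedBall 0 1) :=
    Φ.continuous.comp_continuousOn <| hV.comp Φ.symm.continuous.continuousOn fun z hz ↦ by
      simpa using hz
  obtain ⟨z, hz, hWz⟩ := Complex.exists_mem_ball_eq_zero_of_inner_pos hW fun z hz ↦ by
    have := hout (Φ.symm z) (by simpa using hz)
    rwa [← Φ.inner_map_map, Φ.apply_symm_apply] at this
  exact ⟨Φ.symm z, by simpa using hz, by simpa using hWz⟩

/-- Poincaré–Hopf obstruction: no nonvanishing continuous vector field on the closed 2-disk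
points outward at every boundary point; consequently any continuous vector field on the disk
that is outward-pointing along the boundary has a zero in the interior. -/
theorem no_nonvanishing_outward_field_on_disk :
    (¬ ∃ V : EuclideanSpace ℝ (Fin 2) → EuclideanSpace ℝ (Fin 2),
        ContinuousOn V (Metric.closedBall 0 1) ∧
        (∀ p ∈ Metric.closedBall (0 : EuclideanSpace ℝ (Fin 2)) 1, V p ≠ 0) ∧
        (∀ p : EuclideanSpace ℝ (Fin 2), ‖p‖ = 1 → 0 < ⟪V p, p⟫)) ∧
    (∀ V : EuclideanSpace ℝ (Fin 2) → EuclideanSpace ℝ (Fin 2),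
        ContinuousOn V (Metric.closedBall 0 1) →
        (∀ p : EuclideanSpace ℝ (Fin 2), ‖p‖ = 1 → 0 < ⟪V p, p⟫) →
        ∃ p : EuclideanSpace ℝ (Fin 2), ‖p‖ < 1 ∧ V p = 0) := by
  have has_zero := fun V hV hout ↦
    orthonormalBasisOneI.repr.symm.exists_norm_lt_one_eq_zero_of_inner_pos (V := V) hV hout
  refine ⟨fun ⟨V, hV, hne, hout⟩ ↦ ?_, has_zero⟩
  obtain ⟨p, hp, hVp⟩ := has_zero V hV hout
  exact hne p (mem_closedBall_zero_iff.2 hp.le) hVp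
end

section
/- If S is a smooth compact surface with boundary embedded in ℍ¹, diffeomorphic to the closed disk, whose boundary ∂S is a horizontal curve (tangent to span{X,Y}), then S has at least one characteristic point, i.e. a point p with T_pS = span{X(p), Y(p)}. -/
/-- The closed unit disk in ℝ². -/
def D : Set (ℝ × ℝ) := {p | p.1 ^ 2 + p.2 ^ 2 ≤ 1}

/-- The contact form evaluated at base point `q` on vector `v`. -/
noncomputable def omg (q v : H) : ℝ := v.2.2 + (q.2.1 * v.1 - q.1 * v.2.1) / 2

lemma omg_lin (q : H) (a b : ℝ) (u w : H) :
    omg q (a • u + b • w) = a * omg q u + b * omg q w := by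
  simp [omg, Prod.smul_def, smul_eq_mul]
  ring

lemma omg_Xvec (q : H) : omg q (Xvec q) = 0 := by simp [omg, Xvec]; ring

lemma omg_Yvec (q : H) : omg q (Yvec q) = 0 := by simp [omg, Yvec]; ring

lemma omg_eq_zero_of_mem {q v : H}
    (h : v ∈ Submodule.span ℝ {Xvec q, Yvec q}) : omg q v = 0 := by
  rcases Submodule.mem_span_pair.1 h with ⟨a, b, rfl⟩
  rw [omg_lin, omg_Xvec, omg_Yvec]; ring

lemma mem_span_XY {q v : H} (h : omg q v = 0) :
    v ∈ Submodule.span ℝ {Xvec q, Yvec q} := by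
  rw [Submodule.mem_span_pair]
  refine ⟨v.1, v.2.1, ?_⟩
  have h3 : v.1 * (-q.2.1 / 2) + v.2.1 * (q.1 / 2) = v.2.2 := by
    simp [omg] at h; linarith
  simp only [Xvec, Yvec, Prod.smul_mk, smul_eq_mul, Prod.mk_add_mk]
  refine Prod.ext ?_ (Prod.ext ?_ ?_) <;> simp <;> linarith [h3]

lemma XY_indep (q : H) : LinearIndependent ℝ ![Xvec q, Yvec q] := by
  rw [LinearIndependent.pair_iff]
  intro s t h
  have h1 := congrArg Prod.fst h
  have h2 := congrArg (fun v : H => v.2.1) h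
  simp [Xvec, Yvec] at h1 h2
  exact ⟨h1, h2⟩

lemma span_pair_eq_range {V : Type*} [AddCommGroup V] [Module ℝ V] (a b : V) :
    ({a, b} : Set V) = Set.range ![a, b] := by
  ext x
  simp [Matrix.range_cons, Matrix.range_empty]
  tauto

lemma span_eq_of_omg {q A B : H} (hA : omg q A = 0) (hB : omg q B = 0)
    (hind : LinearIndependent ℝ ![A, B]) :
    Submodule.span ℝ {A, B} = Submodule.span ℝ {Xvec q, Yvec q} := by
  have hle : Submodule.span ℝ {A, B} ≤ Submodule.span ℝ {Xvec q, Yvec q} := by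
    rw [Submodule.span_le]
    intro x hx
    rcases hx with rfl | hx
    · exact mem_span_XY hA
    · rcases hx with rfl
      exact mem_span_XY hB
  have hr1 : Module.finrank ℝ (Submodule.span ℝ ({A, B} : Set H)) = 2 := by
    rw [span_pair_eq_range, finrank_span_eq_card hind]
    simp
  have hr2 : Module.finrank ℝ (Submodule.span ℝ ({Xvec q, Yvec q} : Set H)) = 2 := by
    rw [span_pair_eq_range, finrank_span_eq_card (XY_indep q)]
    simp
  exact Submodule.eq_of_le_of_finrank_le hle (by rw [hr1, hr2])


lemma im_int_mul (k : ℤ) : ((k : ℂ) * (2 * Real.pi * Complex.I)).im = 2 * Real.pi * k := by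
  simp [Complex.mul_im]; ring

lemma aux_no_jump {g : ℝ → ℂ} {a b : ℝ}
    (hg : ContinuousOn g (Set.uIcc a b))
    (hv : ∀ x ∈ Set.uIcc a b, ∃ n : ℤ, g x = n * (2 * Real.pi * Complex.I))
    {m n : ℤ} (hm : g a = m * (2 * Real.pi * Complex.I))
    (hn : g b = n * (2 * Real.pi * Complex.I)) (hlt : m < n) : False := by
  set u : ℝ → ℝ := fun x => (g x).im with hu
  have hucont : ContinuousOn u (Set.uIcc a b) := Complex.continuous_im.comp_continuousOn hg
  have hua : u a = 2 * Real.pi * m := by rw [hu]; simp only [hm]; exact im_int_mul m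
  have hub : u b = 2 * Real.pi * n := by rw [hu]; simp only [hn]; exact im_int_mul n
  have hπ := Real.pi_pos
  have hcast : (m : ℝ) + 1 ≤ (n : ℝ) := by exact_mod_cast hlt
  have hmem : ((2 * (m : ℝ) + 1) * Real.pi) ∈ Set.uIcc (u a) (u b) := by
    rw [Set.mem_uIcc, hua, hub]
    left
    constructor <;> nlinarith
  obtain ⟨x, hx, hux⟩ := intermediate_value_uIcc hucont hmem
  obtain ⟨k, hk⟩ := hv x hx
  have hukx : u x = 2 * Real.pi * k := by rw [hu]; simp only [hk]; exact im_int_mul k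
  rw [hukx] at hux
  have h1 : (2 * (m : ℝ) + 1) = 2 * (k : ℝ) := by
    have h2 : (2 * (k : ℝ)) * Real.pi = (2 * (m : ℝ) + 1) * Real.pi := by linarith [hux]
    exact (mul_right_cancel₀ Real.pi_ne_zero h2).symm
  have : 2 * m + 1 = 2 * k := by exact_mod_cast h1
  omega

/-- A continuous function on an interval taking values in `2πiℤ` has equal endpoint values. -/
lemma eq_endpoints_of_2piZ {g : ℝ → ℂ} {a b : ℝ}
    (hg : ContinuousOn g (Set.uIcc a b))
    (hv : ∀ x ∈ Set.uIcc a b, ∃ n : ℤ, g x = n * (2 * Real.pi * Complex.I)) :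
    g a = g b := by
  obtain ⟨m, hm⟩ := hv a Set.left_mem_uIcc
  obtain ⟨n, hn⟩ := hv b Set.right_mem_uIcc
  rcases lt_trichotomy m n with h | h | h
  · exact absurd (aux_no_jump hg hv hm hn h) id
  · rw [hm, hn, h]
  · have hg' : ContinuousOn g (Set.uIcc b a) := by rwa [Set.uIcc_comm]
    have hv' : ∀ x ∈ Set.uIcc b a, ∃ n : ℤ, g x = n * (2 * Real.pi * Complex.I) := by
      rwa [Set.uIcc_comm]
    exact absurd (aux_no_jump hg' hv' hn hm h) id


open intervalIntegral in
/-- Truncation to `[-R, R]`. -/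
noncomputable def tr (R r : ℝ) : ℝ := max (-R) (min r R)

lemma tr_cont (R : ℝ) : Continuous (tr R) :=
  continuous_const.max (continuous_id.min continuous_const)

lemma tr_bound (R : ℝ) (hR : 0 ≤ R) (r : ℝ) : -R ≤ tr R r ∧ tr R r ≤ R :=
  ⟨le_max_left _ _, max_le (by linarith) (min_le_right _ _)⟩

lemma tr_of_mem {R r : ℝ} (h1 : -R ≤ r) (h2 : r ≤ R) : tr R r = r := by
  rw [tr, min_eq_left h2, max_eq_right h1]

noncomputable def Gf (F : ℝ × ℝ → ℂ) (R r s : ℝ) : ℂ :=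
  F (tr R r * Real.cos s, tr R r * Real.sin s)

noncomputable def NUf (F : ℝ × ℝ → ℂ) (R r s : ℝ) : ℂ :=
  (fderiv ℝ F (tr R r * Real.cos s, tr R r * Real.sin s))
    (-(tr R r * Real.sin s), tr R r * Real.cos s)

noncomputable def qf (F : ℝ × ℝ → ℂ) (R r s : ℝ) : ℂ := NUf F R r s / Gf F R r s

noncomputable def Lf (F : ℝ × ℝ → ℂ) (R r s : ℝ) : ℂ := ∫ σ in (0:ℝ)..s, qf F R r σ

section Core

variable {F : ℝ × ℝ → ℂ} {R : ℝ}

lemma norm_sq_point (R r s : ℝ) (hR : 0 ≤ R) :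
    (tr R r * Real.cos s) ^ 2 + (tr R r * Real.sin s) ^ 2 ≤ R ^ 2 := by
  have h : (tr R r * Real.cos s) ^ 2 + (tr R r * Real.sin s) ^ 2 = tr R r ^ 2 := by
    rw [mul_pow, mul_pow, ← mul_add, Real.cos_sq_add_sin_sq, mul_one]
  rw [h]
  obtain ⟨h1, h2⟩ := tr_bound R hR r
  exact sq_le_sq' h1 h2

variable (hF : ContDiff ℝ (⊤ : ℕ∞) F) (hR : 1 ≤ R)
  (hnz : ∀ p : ℝ × ℝ, p.1 ^ 2 + p.2 ^ 2 ≤ R ^ 2 → F p ≠ 0)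

include hR hnz in
lemma Gf_ne_zero (r s : ℝ) : Gf F R r s ≠ 0 :=
  hnz _ (norm_sq_point R r s (by linarith))

include hF in
lemma Gf_hasDerivAt (r s : ℝ) : HasDerivAt (Gf F R r) (NUf F R r s) s := by
  have hc : HasDerivAt (fun s : ℝ => tr R r * Real.cos s) (-(tr R r * Real.sin s)) s := by
    simpa [mul_comm, mul_neg] using (Real.hasDerivAt_cos s).const_mul (tr R r)
  have hs : HasDerivAt (fun s : ℝ => tr R r * Real.sin s) (tr R r * Real.cos s) s := by
    simpa using (Real.hasDerivAt_sin s).const_mul (tr R r)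
  have h1 := hc.prodMk hs
  have h2 := (hF.differentiable (by simp) _).hasFDerivAt.comp_hasDerivAt s h1
  exact h2

include hF in
lemma NUf_cont : Continuous (fun x : ℝ × ℝ => NUf F R x.1 x.2) := by
  have hm : Continuous (fun x : ℝ × ℝ =>
      (tr R x.1 * Real.cos x.2, tr R x.1 * Real.sin x.2)) :=
    (((tr_cont R).comp continuous_fst).mul (Real.continuous_cos.comp continuous_snd)).prodMk
      (((tr_cont R).comp continuous_fst).mul (Real.continuous_sin.comp continuous_snd))
  have hv : Continuous (fun x : ℝ × ℝ =>
      ((-(tr R x.1 * Real.sin x.2), tr R x.1 * Real.cos x.2) : ℝ × ℝ)) :=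
    ((((tr_cont R).comp continuous_fst).mul (Real.continuous_sin.comp continuous_snd)).neg).prodMk
      (((tr_cont R).comp continuous_fst).mul (Real.continuous_cos.comp continuous_snd))
  exact ((hF.continuous_fderiv (by simp)).comp hm).clm_apply hv

include hF in
lemma Gf_cont : Continuous (fun x : ℝ × ℝ => Gf F R x.1 x.2) := by
  have hm : Continuous (fun x : ℝ × ℝ =>
      (tr R x.1 * Real.cos x.2, tr R x.1 * Real.sin x.2)) :=
    (((tr_cont R).comp continuous_fst).mul (Real.continuous_cos.comp continuous_snd)).prodMk
      (((tr_cont R).comp continuous_fst).mul (Real.continuous_sin.comp continuous_snd))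
  exact hF.continuous.comp hm

include hF hR hnz in
lemma qf_cont : Continuous (fun x : ℝ × ℝ => qf F R x.1 x.2) :=
  (NUf_cont hF).div (Gf_cont hF) (fun x => Gf_ne_zero hR hnz x.1 x.2)

include hF hR hnz in
lemma Lf_hasDerivAt (r s : ℝ) : HasDerivAt (Lf F R r) (qf F R r s) s := by
  have hc : Continuous (qf F R r) :=
    (qf_cont hF hR hnz).comp (continuous_const.prodMk continuous_id)
  exact (hc.integral_hasStrictDerivAt 0 s).hasDerivAt

include hF hR hnz in
lemma Gf_eq_exp (r s : ℝ) : Gf F R r s = Gf F R r 0 * Complex.exp (Lf F R r s) := by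
  have key : ∀ t : ℝ, HasDerivAt (fun t => Gf F R r t * Complex.exp (-Lf F R r t)) 0 t := by
    intro t
    have h2 : HasDerivAt (fun t => Complex.exp (-Lf F R r t))
        (Complex.exp (-Lf F R r t) * (-qf F R r t)) t :=
      ((Lf_hasDerivAt hF hR hnz r t).neg).cexp
    have h3 := (Gf_hasDerivAt (R := R) hF r t).mul h2
    refine h3.congr_deriv ?_
    have hg := Gf_ne_zero hR hnz (F := F) r t
    rw [qf]
    field_simp
    ring
  have hd : Differentiable ℝ (fun t => Gf F R r t * Complex.exp (-Lf F R r t)) :=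
    fun t => (key t).differentiableAt
  have hconst := is_const_of_deriv_eq_zero hd (fun t => (key t).deriv) s 0
  have hL0 : Lf F R r 0 = 0 := intervalIntegral.integral_same
  rw [hL0] at hconst
  simp only [neg_zero, Complex.exp_zero, mul_one] at hconst
  have hexpne : Complex.exp (-Lf F R r s) ≠ 0 := Complex.exp_ne_zero _
  calc Gf F R r s = Gf F R r s * Complex.exp (-Lf F R r s) * Complex.exp (Lf F R r s) := by
        rw [mul_assoc, ← Complex.exp_add]; simp
    _ = Gf F R r 0 * Complex.exp (Lf F R r s) := by rw [hconst]

lemma Gf_periodic (r : ℝ) : Gf F R r (2 * Real.pi) = Gf F R r 0 := by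
  simp [Gf, Real.cos_two_pi, Real.sin_two_pi]

include hF hR hnz in
lemma W_int (r : ℝ) : ∃ n : ℤ, Lf F R r (2 * Real.pi) = n * (2 * Real.pi * Complex.I) := by
  have h1 := Gf_eq_exp hF hR hnz r (2 * Real.pi)
  rw [Gf_periodic] at h1
  have h2 : Complex.exp (Lf F R r (2 * Real.pi)) = 1 :=
    mul_left_cancel₀ (Gf_ne_zero hR hnz (F := F) r 0)
      (by rw [mul_one]; exact h1.symm)
  exact Complex.exp_eq_one_iff.mp h2

include hF hR hnz in
lemma W_cont : Continuous (fun r => Lf F R r (2 * Real.pi)) := by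
  have := intervalIntegral.continuous_parametric_intervalIntegral_of_continuous'
    (μ := MeasureTheory.volume) (f := fun r s => qf F R r s)
    (by exact qf_cont hF hR hnz) 0 (2 * Real.pi)
  exact this

include hR in
lemma W_zero : Lf F R 0 (2 * Real.pi) = 0 := by
  have htr0 : tr R 0 = 0 := tr_of_mem (by linarith) (by linarith)
  have : ∀ s : ℝ, qf F R 0 s = 0 := by
    intro s
    rw [qf, NUf, htr0]
    simp [Prod.mk_zero_zero]
  rw [Lf]
  simp [this]

end Core

noncomputable def lam (F : ℝ × ℝ → ℂ) (s : ℝ) : ℝ :=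
  (F (Real.cos s, Real.sin s)).re * Real.cos s + (F (Real.cos s, Real.sin s)).im * Real.sin s

section Boundary

variable {F : ℝ × ℝ → ℂ} {R : ℝ}
variable (hF : ContDiff ℝ (⊤ : ℕ∞) F) (hR : 1 ≤ R)
  (hnz : ∀ p : ℝ × ℝ, p.1 ^ 2 + p.2 ^ 2 ≤ R ^ 2 → F p ≠ 0)
  (hb : ∀ s : ℝ, Real.cos s * (F (Real.cos s, Real.sin s)).im
      = Real.sin s * (F (Real.cos s, Real.sin s)).re)

include hR in
lemma tr_one : tr R 1 = 1 := tr_of_mem (by linarith) (by linarith)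

include hR in
lemma Gf_one (s : ℝ) : Gf F R 1 s = F (Real.cos s, Real.sin s) := by
  rw [Gf, tr_one hR]; simp

include hb in
lemma F_eq_lam_exp (s : ℝ) :
    F (Real.cos s, Real.sin s) = (lam F s : ℂ) * Complex.exp (s * Complex.I) := by
  have hpyth := Real.cos_sq_add_sin_sq s
  have hbs := hb s
  apply Complex.ext
  · simp only [Complex.exp_mul_I, lam, Complex.add_re, Complex.mul_re, Complex.mul_im,
      Complex.ofReal_re, Complex.ofReal_im, Complex.cos_ofReal_re, Complex.cos_ofReal_im,
      Complex.sin_ofReal_re, Complex.sin_ofReal_im, Complex.I_re, Complex.I_im, Complex.add_im]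
    linear_combination (-(F (Real.cos s, Real.sin s)).re) * hpyth - Real.sin s * hbs
  · simp only [Complex.exp_mul_I, lam, Complex.add_re, Complex.mul_re, Complex.mul_im,
      Complex.ofReal_re, Complex.ofReal_im, Complex.cos_ofReal_re, Complex.cos_ofReal_im,
      Complex.sin_ofReal_re, Complex.sin_ofReal_im, Complex.I_re, Complex.I_im, Complex.add_im]
    linear_combination (-(F (Real.cos s, Real.sin s)).im) * hpyth + Real.cos s * hbs

include hR hnz hb in
lemma lam_ne_zero (s : ℝ) : lam F s ≠ 0 := by
  intro h0
  have h1 : F (Real.cos s, Real.sin s) = 0 := by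
    rw [F_eq_lam_exp hb s, h0]; simp
  have h2 : (Real.cos s) ^ 2 + (Real.sin s) ^ 2 ≤ R ^ 2 := by
    rw [Real.cos_sq_add_sin_sq]; nlinarith
  exact hnz _ h2 h1

include hF in
lemma lam_cont : Continuous (lam F) := by
  have h1 : Continuous (fun s : ℝ => F (Real.cos s, Real.sin s)) :=
    hF.continuous.comp (Real.continuous_cos.prodMk Real.continuous_sin)
  exact ((Complex.continuous_re.comp h1).mul Real.continuous_cos).add
    ((Complex.continuous_im.comp h1).mul Real.continuous_sin)

include hF hR hnz hb in
lemma lam_sign (s : ℝ) : 0 < lam F s * lam F 0 := by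
  by_contra hcon
  push_neg at hcon
  have hne : lam F s * lam F 0 ≠ 0 :=
    mul_ne_zero (lam_ne_zero hR hnz hb s) (lam_ne_zero hR hnz hb 0)
  have hlt : lam F s * lam F 0 < 0 := lt_of_le_of_ne hcon hne
  have hc : Continuous (fun u => lam F u * lam F 0) := (lam_cont hF).mul continuous_const
  have hpos : 0 < lam F 0 * lam F 0 := mul_self_pos.2 (lam_ne_zero hR hnz hb 0)
  have hmem : (0 : ℝ) ∈ Set.uIcc (lam F s * lam F 0) (lam F 0 * lam F 0) := by
    rw [Set.mem_uIcc]; left; exact ⟨le_of_lt hlt, le_of_lt hpos⟩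
  obtain ⟨x, _, hx⟩ := intermediate_value_uIcc (hc.continuousOn (s := Set.uIcc s 0)) hmem
  have hx' : lam F x * lam F 0 = 0 := by simpa using hx.symm
  have : lam F x = 0 := by
    rcases mul_eq_zero.1 hx' with h | h
    · exact h
    · exact absurd h (lam_ne_zero hR hnz hb 0)
  exact lam_ne_zero hR hnz hb x this

noncomputable def Mlift (F : ℝ × ℝ → ℂ) (s : ℝ) : ℂ :=
  (Real.log (lam F s / lam F 0) : ℂ) + s * Complex.I + Complex.log (lam F 0 : ℂ)

include hF hR hnz hb in
lemma exp_Mlift (s : ℝ) :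
    Complex.exp (Mlift F s) = (lam F s : ℂ) * Complex.exp (s * Complex.I) := by
  have hdivpos : 0 < lam F s / lam F 0 := by
    rcases mul_pos_iff.1 (lam_sign hF hR hnz hb s) with ⟨h1, h2⟩ | ⟨h1, h2⟩
    · exact div_pos h1 h2
    · exact div_pos_of_neg_of_neg h1 h2
  have h1 : Complex.exp ((Real.log (lam F s / lam F 0) : ℂ)) = ((lam F s / lam F 0 : ℝ) : ℂ) := by
    rw [← Complex.ofReal_exp, Real.exp_log hdivpos]
  have h2 : Complex.exp (Complex.log ((lam F 0 : ℝ) : ℂ)) = ((lam F 0 : ℝ) : ℂ) :=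
    Complex.exp_log (Complex.ofReal_ne_zero.2 (lam_ne_zero hR hnz hb 0))
  rw [Mlift, Complex.exp_add, Complex.exp_add, h1, h2]
  have hne : ((lam F 0 : ℝ) : ℂ) ≠ 0 := Complex.ofReal_ne_zero.2 (lam_ne_zero hR hnz hb 0)
  push_cast
  field_simp

include hF hR hnz hb in
lemma W_one : Lf F R 1 (2 * Real.pi) = 2 * Real.pi * Complex.I := by
  set N : ℝ → ℂ := fun s => Lf F R 1 s + Complex.log (Gf F R 1 0) - Mlift F s with hN
  have hGs : ∀ s, Gf F R 1 s = (lam F s : ℂ) * Complex.exp (s * Complex.I) := by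
    intro s; rw [Gf_one hR, F_eq_lam_exp hb]
  have hexpN : ∀ s, Complex.exp (N s) = 1 := by
    intro s
    rw [hN]
    simp only []
    rw [Complex.exp_sub, Complex.exp_add, exp_Mlift hF hR hnz hb,
      Complex.exp_log (Gf_ne_zero hR hnz (F := F) 1 0)]
    have hL : Complex.exp (Lf F R 1 s) = Gf F R 1 s / Gf F R 1 0 := by
      rw [Gf_eq_exp hF hR hnz 1 s]
      field_simp [Gf_ne_zero hR hnz (F := F) 1 0]
    rw [hL, hGs s]
    have h1 : ((lam F s : ℝ) : ℂ) ≠ 0 := Complex.ofReal_ne_zero.2 (lam_ne_zero hR hnz hb s)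
    have h2 : Gf F R 1 0 ≠ 0 := Gf_ne_zero hR hnz (F := F) 1 0
    have h3 : Complex.exp (s * Complex.I) ≠ 0 := Complex.exp_ne_zero _
    field_simp
  have hNv : ∀ x ∈ Set.uIcc (0 : ℝ) (2 * Real.pi), ∃ n : ℤ,
      N x = n * (2 * Real.pi * Complex.I) := fun x _ => Complex.exp_eq_one_iff.mp (hexpN x)
  have hNc : ContinuousOn N (Set.uIcc (0 : ℝ) (2 * Real.pi)) := by
    have hLc : Continuous (Lf F R 1) := by
      rw [continuous_iff_continuousAt]
      exact fun s => (Lf_hasDerivAt hF hR hnz 1 s).continuousAt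
    have hMc : Continuous (Mlift F) := by
      have hdc : Continuous (fun s => lam F s / lam F 0) := (lam_cont hF).div_const _
      have hlogc : Continuous (fun s => Real.log (lam F s / lam F 0)) := by
        rw [continuous_iff_continuousAt]
        intro s
        have hdivpos : 0 < lam F s / lam F 0 := by
          rcases mul_pos_iff.1 (lam_sign hF hR hnz hb s) with ⟨h1, h2⟩ | ⟨h1, h2⟩
          · exact div_pos h1 h2
          · exact div_pos_of_neg_of_neg h1 h2
        exact ContinuousAt.comp (x := s) (Real.continuousAt_log (ne_of_gt hdivpos))
          hdc.continuousAt
      exact ((Complex.continuous_ofReal.comp hlogc).add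
        ((Complex.continuous_ofReal.mul continuous_const))).add continuous_const
    exact ((hLc.add continuous_const).sub hMc).continuousOn
  have hend := eq_endpoints_of_2piZ hNc hNv
  have hL0 : Lf F R 1 0 = 0 := intervalIntegral.integral_same
  have hlamper : lam F (2 * Real.pi) = lam F 0 := by
    simp [lam, Real.cos_two_pi, Real.sin_two_pi]
  have hM0 : Mlift F 0 = Complex.log (lam F 0 : ℂ) := by
    rw [Mlift, div_self (lam_ne_zero hR hnz hb 0)]
    simp
  have hM2 : Mlift F (2 * Real.pi) =
      Complex.log (lam F 0 : ℂ) + 2 * Real.pi * Complex.I := by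
    rw [Mlift, hlamper, div_self (lam_ne_zero hR hnz hb 0)]
    push_cast [Real.log_one]
    ring
  rw [hN] at hend
  simp only [] at hend
  rw [hL0, hM0, hM2] at hend
  linear_combination -hend
end Boundary

section Final

variable {F : ℝ × ℝ → ℂ} {R : ℝ}

lemma core_contradiction (hF : ContDiff ℝ (⊤ : ℕ∞) F) (hR : 1 ≤ R)
    (hnz : ∀ p : ℝ × ℝ, p.1 ^ 2 + p.2 ^ 2 ≤ R ^ 2 → F p ≠ 0)
    (hb : ∀ s : ℝ, Real.cos s * (F (Real.cos s, Real.sin s)).im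
        = Real.sin s * (F (Real.cos s, Real.sin s)).re) : False := by
  have h01 := eq_endpoints_of_2piZ (g := fun r => Lf F R r (2 * Real.pi)) (a := 0) (b := 1)
    ((W_cont hF hR hnz).continuousOn) (fun x _ => W_int hF hR hnz x)
  simp only [W_zero hR (F := F), W_one hF hR hnz hb] at h01
  have hpi := Real.pi_ne_zero
  rw [Complex.ext_iff] at h01
  simp [Complex.mul_im] at h01

end Final

noncomputable def f1 (Φ : ℝ × ℝ → H) (p : ℝ × ℝ) : ℝ :=
  omg (Φ p) (fderiv ℝ Φ p ((1 : ℝ), (0 : ℝ)))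

noncomputable def f2 (Φ : ℝ × ℝ → H) (p : ℝ × ℝ) : ℝ :=
  omg (Φ p) (fderiv ℝ Φ p ((0 : ℝ), (1 : ℝ)))

noncomputable def Fc (Φ : ℝ × ℝ → H) (p : ℝ × ℝ) : ℂ :=
  (f1 Φ p : ℂ) + (f2 Φ p : ℂ) * Complex.I

lemma Fc_re (Φ : ℝ × ℝ → H) (p : ℝ × ℝ) : (Fc Φ p).re = f1 Φ p := by simp [Fc]

lemma Fc_im (Φ : ℝ × ℝ → H) (p : ℝ × ℝ) : (Fc Φ p).im = f2 Φ p := by simp [Fc]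

lemma Fc_eq_zero_iff (Φ : ℝ × ℝ → H) (p : ℝ × ℝ) :
    Fc Φ p = 0 ↔ f1 Φ p = 0 ∧ f2 Φ p = 0 := by
  rw [Complex.ext_iff, Fc_re, Fc_im]
  simp [Fc]

lemma Fc_contDiff {Φ : ℝ × ℝ → H} (hΦ : ContDiff ℝ (⊤ : ℕ∞) Φ) : ContDiff ℝ (⊤ : ℕ∞) (Fc Φ) := by
  have hA : ContDiff ℝ (⊤ : ℕ∞) (fun p => fderiv ℝ Φ p ((1 : ℝ), (0 : ℝ))) :=
    (hΦ.fderiv_right (by simp)).clm_apply contDiff_const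
  have hB : ContDiff ℝ (⊤ : ℕ∞) (fun p => fderiv ℝ Φ p ((0 : ℝ), (1 : ℝ))) :=
    (hΦ.fderiv_right (by simp)).clm_apply contDiff_const
  have homg : ∀ (A : ℝ × ℝ → H), ContDiff ℝ (⊤ : ℕ∞) A →
      ContDiff ℝ (⊤ : ℕ∞) (fun p => omg (Φ p) (A p)) := by
    intro A hA
    have h1 : ContDiff ℝ (⊤ : ℕ∞) (fun p => (A p).2.2) :=
      contDiff_snd.comp (contDiff_snd.comp hA)
    have h2 : ContDiff ℝ (⊤ : ℕ∞) (fun p => (Φ p).2.1 * (A p).1) :=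
      (contDiff_fst.comp (contDiff_snd.comp hΦ)).mul (contDiff_fst.comp hA)
    have h3 : ContDiff ℝ (⊤ : ℕ∞) (fun p => (Φ p).1 * (A p).2.1) :=
      (contDiff_fst.comp hΦ).mul (contDiff_fst.comp (contDiff_snd.comp hA))
    exact h1.add ((h2.sub h3).div_const 2)
  have hf1 : ContDiff ℝ (⊤ : ℕ∞) (f1 Φ) := homg _ hA
  have hf2 : ContDiff ℝ (⊤ : ℕ∞) (f2 Φ) := homg _ hB
  exact (Complex.ofRealCLM.contDiff.comp hf1).add
    ((Complex.ofRealCLM.contDiff.comp hf2).mul contDiff_const)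

/-- A smooth compact surface in ℍ¹ diffeomorphic to the closed disk (parametrized by a smooth
injective immersion Φ of the disk) whose boundary curve is horizontal must have at least one
characteristic point, i.e. a point where the tangent plane equals the horizontal plane. -/
theorem disk_with_horizontal_boundary_has_characteristic_point
    (Φ : ℝ × ℝ → H) (hΦ : ContDiff ℝ (⊤ : ℕ∞) Φ) (hinj : Set.InjOn Φ D)
    (himm : ∀ p ∈ D, LinearIndependent ℝ
      ![fderiv ℝ Φ p ((1 : ℝ), (0 : ℝ)), fderiv ℝ Φ p ((0 : ℝ), (1 : ℝ))])
    (hbdry : ∀ s : ℝ, deriv (fun s => Φ (Real.cos s, Real.sin s)) s ∈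
      Submodule.span ℝ {Xvec (Φ (Real.cos s, Real.sin s)), Yvec (Φ (Real.cos s, Real.sin s))}) :
    ∃ p ∈ D, Submodule.span ℝ
        {fderiv ℝ Φ p ((1 : ℝ), (0 : ℝ)), fderiv ℝ Φ p ((0 : ℝ), (1 : ℝ))} =
      Submodule.span ℝ {Xvec (Φ p), Yvec (Φ p)} := by
  by_contra hcon
  push_neg at hcon
  -- the function Fc Φ is nonvanishing on D
  have hFC := Fc_contDiff hΦ
  have hnzD : ∀ p ∈ D, Fc Φ p ≠ 0 := by
    intro p hp h0
    obtain ⟨h1, h2⟩ := (Fc_eq_zero_iff Φ p).1 h0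
    exact hcon p hp (span_eq_of_omg h1 h2 (himm p hp))
  -- thickening: nonvanishing on a slightly larger disk
  have hDclosed : IsClosed D := by
    have : D = (fun p : ℝ × ℝ => p.1 ^ 2 + p.2 ^ 2) ⁻¹' Set.Iic 1 := rfl
    rw [this]
    exact IsClosed.preimage ((continuous_fst.pow 2).add (continuous_snd.pow 2)) isClosed_Iic
  have hDbdd : Bornology.IsBounded D := by
    apply (Metric.isBounded_closedBall (x := ((0, 0) : ℝ × ℝ)) (r := 1)).subset
    intro p hp
    have hp' : p.1 ^ 2 + p.2 ^ 2 ≤ 1 := hp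
    rw [Metric.mem_closedBall, Prod.dist_eq]
    apply max_le
    · rw [Real.dist_eq, show ((0, 0) : ℝ × ℝ).1 = 0 from rfl, sub_zero, abs_le]
      constructor <;> nlinarith [sq_nonneg p.1, sq_nonneg p.2]
    · rw [Real.dist_eq, show ((0, 0) : ℝ × ℝ).2 = 0 from rfl, sub_zero, abs_le]
      constructor <;> nlinarith [sq_nonneg p.1, sq_nonneg p.2]
  have hDcomp : IsCompact D := Metric.isCompact_of_isClosed_isBounded hDclosed hDbdd
  have hUopen : IsOpen ((Fc Φ ⁻¹' {0})ᶜ) :=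
    (isClosed_singleton.preimage hFC.continuous).isOpen_compl
  have hsubU : D ⊆ (Fc Φ ⁻¹' {0})ᶜ := fun p hp => hnzD p hp
  obtain ⟨δ, hδpos, hthick⟩ := hDcomp.exists_thickening_subset_open hUopen hsubU
  set R : ℝ := 1 + δ / 2 with hRdef
  have hR : 1 ≤ R := by rw [hRdef]; linarith
  have hnzR : ∀ p : ℝ × ℝ, p.1 ^ 2 + p.2 ^ 2 ≤ R ^ 2 → Fc Φ p ≠ 0 := by
    intro p hpR
    rcases le_or_gt (p.1 ^ 2 + p.2 ^ 2) 1 with h1 | h1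
    · exact hnzD p h1
    · apply hthick
      rw [Metric.mem_thickening_iff]
      set r : ℝ := Real.sqrt (p.1 ^ 2 + p.2 ^ 2) with hrdef
      have hr1 : 1 < r := by
        rw [hrdef]
        rw [show (1 : ℝ) = Real.sqrt 1 by simp]
        exact Real.sqrt_lt_sqrt (by norm_num) h1
      have hr2 : r ^ 2 = p.1 ^ 2 + p.2 ^ 2 := Real.sq_sqrt (by positivity)
      have hrR : r ≤ R := by
        rw [hrdef]
        calc Real.sqrt (p.1 ^ 2 + p.2 ^ 2) ≤ Real.sqrt (R ^ 2) := Real.sqrt_le_sqrt hpR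
          _ = R := Real.sqrt_sq (by linarith)
      have hrpos : (0 : ℝ) < r := by linarith
      refine ⟨(p.1 / r, p.2 / r), ?_, ?_⟩
      · show (p.1 / r) ^ 2 + (p.2 / r) ^ 2 ≤ 1
        rw [div_pow, div_pow, ← add_div, ← hr2]
        rw [div_self (by positivity)]
      · have key : ∀ x : ℝ, x ^ 2 ≤ r ^ 2 → dist x (x / r) < δ := by
          intro x hx
          have hxr : |x| ≤ r := by nlinarith [sq_abs x, abs_nonneg x]
          have h3 : (0 : ℝ) ≤ 1 - 1 / r := by
            rw [sub_nonneg]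
            rw [div_le_one hrpos]
            linarith
          calc dist x (x / r) = |x * (1 - 1 / r)| := by
                rw [Real.dist_eq]; congr 1; field_simp
            _ = |x| * (1 - 1 / r) := by rw [abs_mul, abs_of_nonneg h3]
            _ ≤ r * (1 - 1 / r) := by apply mul_le_mul_of_nonneg_right hxr h3
            _ = r - 1 := by field_simp
            _ ≤ δ / 2 := by rw [hRdef] at hrR; linarith
            _ < δ := by linarith
        rw [Prod.dist_eq]
        apply max_lt
        · exact key p.1 (by nlinarith [sq_nonneg p.2])
        · exact key p.2 (by nlinarith [sq_nonneg p.1])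
  -- boundary relation
  have hbrel : ∀ s : ℝ, Real.cos s * (Fc Φ (Real.cos s, Real.sin s)).im
      = Real.sin s * (Fc Φ (Real.cos s, Real.sin s)).re := by
    intro s
    have h1 : HasDerivAt (fun u : ℝ => ((Real.cos u, Real.sin u) : ℝ × ℝ))
        (-Real.sin s, Real.cos s) s := (Real.hasDerivAt_cos s).prodMk (Real.hasDerivAt_sin s)
    have h2 : HasDerivAt (fun u : ℝ => Φ (Real.cos u, Real.sin u))
        (fderiv ℝ Φ (Real.cos s, Real.sin s) (-Real.sin s, Real.cos s)) s := by
      have := (hΦ.differentiable (by simp) _).hasFDerivAt.comp_hasDerivAt s h1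
      exact this
    have h3 := hbdry s
    rw [h2.deriv] at h3
    have h4 := omg_eq_zero_of_mem h3
    have h5 : ((-Real.sin s, Real.cos s) : ℝ × ℝ)
        = (-Real.sin s) • ((1 : ℝ), (0 : ℝ)) + (Real.cos s) • ((0 : ℝ), (1 : ℝ)) := by
      simp [Prod.ext_iff]
    rw [h5, map_add, map_smul, map_smul, omg_lin] at h4
    rw [Fc_re, Fc_im, f1, f2]
    linarith [h4]
  exact core_contradiction hFC hR hnzR hbrel
end
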